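/- arXiv:math/0405520 — 5 statements merged into one kernel-verified Lean document; each statement's English description precedes it below -/
import Mathlib

section
/- For any probability measure μ on ℝ and any nonnegative measurable function f with ∫ f² dμ = 1, we have ∫_{f ≥ 2} f² dμ ≤ 8 Var_μ(f). -/
open MeasureTheory Real

theorem stmt_1 (μ : Measure ℝ) [IsProbabilityMeasure μ] (f : ℝ → ℝ)
    (hf : Measurable f) (hpos : ∀ x, 0 ≤ f x)
    (hint : Integrable f μ) (hint2 : Integrable (fun x => f x ^ 2) μ)
    (hnorm : ∫ x, f x ^ 2 ∂μ = 1) :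
    ∫ x in {x | 2 ≤ f x}, f x ^ 2 ∂μ ≤ 8 * (∫ x, f x ^ 2 ∂μ - (∫ x, f x ∂μ) ^ 2) := by
  set m : ℝ := ∫ x, f x ∂μ with hm
  have hm0 : 0 ≤ m := integral_nonneg hpos
  have hintg : Integrable (fun x => (f x - m) ^ 2) μ := by
    have : (fun x => (f x - m) ^ 2) = fun x => f x ^ 2 - (2 * m) * f x + m ^ 2 := by
      funext x; ring
    rw [this]
    exact ((hint2.sub (hint.const_mul (2 * m))).add (integrable_const _))
  have hvar : ∫ x, (f x - m) ^ 2 ∂μ = 1 - m ^ 2 := by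
    have h1 : (fun x => (f x - m) ^ 2) = fun x => f x ^ 2 - (2 * m) * f x + m ^ 2 := by
      funext x; ring
    have hi1 : Integrable (fun x => f x ^ 2 - 2 * m * f x) μ := hint2.sub (hint.const_mul (2 * m))
    rw [h1, integral_add hi1 (integrable_const _),
      integral_sub hint2 (hint.const_mul (2 * m)), integral_const_mul, hnorm, integral_const]
    simp [← hm]
    ring
  have hvar0 : 0 ≤ 1 - m ^ 2 := by
    rw [← hvar]; exact integral_nonneg fun x => sq_nonneg _
  have hm1 : m ≤ 1 := by nlinarith
  have hset : MeasurableSet {x : ℝ | 2 ≤ f x} := measurableSet_le measurable_const hf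
  have step1 : ∫ x in {x | 2 ≤ f x}, f x ^ 2 ∂μ ≤ ∫ x in {x | 2 ≤ f x}, 4 * (f x - m) ^ 2 ∂μ := by
    apply setIntegral_mono_on (hint2.integrableOn) ((hintg.const_mul 4).integrableOn) hset
    intro x hx
    have h2 : 2 ≤ f x := hx
    nlinarith
  have step2 : ∫ x in {x | 2 ≤ f x}, 4 * (f x - m) ^ 2 ∂μ ≤ ∫ x, 4 * (f x - m) ^ 2 ∂μ := by
    apply setIntegral_le_integral (hintg.const_mul 4)
    filter_upwards with x
    positivity
  have step3 : ∫ x, 4 * (f x - m) ^ 2 ∂μ = 4 * (1 - m ^ 2) := by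
    rw [integral_const_mul, hvar]
  calc ∫ x in {x | 2 ≤ f x}, f x ^ 2 ∂μ ≤ 4 * (1 - m ^ 2) := by
        rw [← step3]; exact step1.trans step2
    _ ≤ 8 * (∫ x, f x ^ 2 ∂μ - m ^ 2) := by rw [hnorm]; nlinarith
end

section
/- For any probability measure μ and any nonnegative measurable function f with ∫ f² dμ = 1, we have ∫_{f ≥ 2} f² log f² dμ ≤ (log 4 / (log 4 - 1)) · Ent_μ(f²), where Ent_μ(f²) = ∫ f² log f² dμ (since ∫ f² dμ = 1). -/
/-!
Split the entropy integral along `s = {f ≥ 2}` and let `S = ∫_s f²`. On `s`, `f² log f² ≥ log 4 · f²`,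
so `∫_s f² log f² ≥ log 4 · S`. Off `s`, `t log t ≥ t - 1` together with `∫_{sᶜ} f² = 1 - S` and
`μ sᶜ ≤ 1` gives `∫_{sᶜ} f² log f² ≥ -S`. Hence `Ent ≥ ∫_s f² log f² - S ≥ (1 - 1 / log 4) ∫_s f² log f²`.
-/

open MeasureTheory Real

lemma Real.log_mul_le_mul_log_of_le {c t : ℝ} (hc : 0 < c) (hct : c ≤ t) :
    log c * t ≤ t * log t := by
  rw [mul_comm]
  exact mul_le_mul_of_nonneg_left (log_le_log hc hct) (hc.le.trans hct)

section

variable {Ω : Type*} [MeasurableSpace Ω] {μ : Measure Ω} {g : Ω → ℝ} {s : Set Ω}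

lemma log_mul_setIntegral_le_setIntegral_mul_log {c : ℝ} (hc : 0 < c) (hs : MeasurableSet s)
    (hg : Integrable g μ) (hgl : Integrable (fun x => g x * log (g x)) μ)
    (hcs : ∀ x ∈ s, c ≤ g x) :
    log c * ∫ x in s, g x ∂μ ≤ ∫ x in s, g x * log (g x) ∂μ := by
  rw [← integral_const_mul]
  exact setIntegral_mono_on (hg.integrableOn.const_mul _) hgl.integrableOn hs
    fun x hx => log_mul_le_mul_log_of_le hc (hcs x hx)

lemma neg_setIntegral_le_setIntegral_compl_mul_log [IsProbabilityMeasure μ]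
    (hs : MeasurableSet s) (hg0 : ∀ x, 0 ≤ g x) (hg : Integrable g μ)
    (hgl : Integrable (fun x => g x * log (g x)) μ) (hnorm : ∫ x, g x ∂μ = 1) :
    -∫ x in s, g x ∂μ ≤ ∫ x in sᶜ, g x * log (g x) ∂μ := by
  have hsplit := integral_add_compl hs hg
  have hsub_one : ∫ x in sᶜ, (g x - 1) ∂μ ≤ ∫ x in sᶜ, g x * log (g x) ∂μ :=
    setIntegral_mono_on (hg.sub (integrable_const 1)).integrableOn hgl.integrableOn hs.compl
      fun x _ => self_sub_one_le_mul_log (hg0 x)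
  rw [integral_sub hg.integrableOn (integrable_const 1), setIntegral_const, smul_eq_mul,
    mul_one] at hsub_one
  have hcompl_le_one : μ.real sᶜ ≤ 1 := measureReal_le_one
  linarith

lemma setIntegral_mul_log_le_of_le [IsProbabilityMeasure μ] {c : ℝ} (hc : exp 1 < c)
    (hs : MeasurableSet s) (hg0 : ∀ x, 0 ≤ g x) (hg : Integrable g μ)
    (hgl : Integrable (fun x => g x * log (g x)) μ) (hnorm : ∫ x, g x ∂μ = 1)
    (hcs : ∀ x ∈ s, c ≤ g x) :
    ∫ x in s, g x * log (g x) ∂μ ≤ log c / (log c - 1) * ∫ x, g x * log (g x) ∂μ := by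
  have hc0 : 0 < c := (exp_pos 1).trans hc
  have hlog : 1 < log c := (lt_log_iff_exp_lt hc0).2 hc
  have hon := log_mul_setIntegral_le_setIntegral_mul_log hc0 hs hg hgl hcs
  have hoff := neg_setIntegral_le_setIntegral_compl_mul_log hs hg0 hg hgl hnorm
  have hsplit := integral_add_compl hs hgl
  have hS : 0 ≤ ∫ x in s, g x ∂μ := setIntegral_nonneg hs fun x _ => hg0 x
  rw [div_mul_eq_mul_div, le_div_iff₀ (by linarith)]
  nlinarith

end

theorem stmt_2_general {Ω : Type*} [MeasurableSpace Ω] (μ : Measure Ω) [IsProbabilityMeasure μ]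
    (f : Ω → ℝ) (hf : Measurable f)
    (hint2 : Integrable (fun x => f x ^ 2) μ)
    (hint3 : Integrable (fun x => f x ^ 2 * Real.log (f x ^ 2)) μ)
    (hnorm : ∫ x, f x ^ 2 ∂μ = 1) :
    ∫ x in {x | 2 ≤ f x}, f x ^ 2 * Real.log (f x ^ 2) ∂μ ≤
      (Real.log 4 / (Real.log 4 - 1)) * ∫ x, f x ^ 2 * Real.log (f x ^ 2) ∂μ := by
  have he4 : exp 1 < 4 := by linarith [exp_one_lt_d9]
  refine setIntegral_mul_log_le_of_le he4 (measurableSet_le measurable_const hf)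
    (fun x => sq_nonneg (f x)) hint2 hint3 hnorm fun x (hx : 2 ≤ f x) => ?_
  nlinarith

theorem stmt_2 {Ω : Type*} [MeasurableSpace Ω] (μ : Measure Ω) [IsProbabilityMeasure μ]
    (f : Ω → ℝ) (hf : Measurable f) (hpos : ∀ x, 0 ≤ f x)
    (hint2 : Integrable (fun x => f x ^ 2) μ)
    (hint3 : Integrable (fun x => f x ^ 2 * Real.log (f x ^ 2)) μ)
    (hnorm : ∫ x, f x ^ 2 ∂μ = 1) :
    ∫ x in {x | 2 ≤ f x}, f x ^ 2 * Real.log (f x ^ 2) ∂μ ≤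
      (Real.log 4 / (Real.log 4 - 1)) * ∫ x, f x ^ 2 * Real.log (f x ^ 2) ∂μ :=
  stmt_2_general μ f hf hint2 hint3 hnorm
end

section
/- For every real x ≥ 0, x² log x² ≤ 5(x-1)² + (x²-1) + (x-2)₊² log((x-2)₊²), where (x-2)₊ = max(x-2, 0) and by convention 0·log 0 = 0. -/
open Real

private lemma aux_sub_one_le_mul_log (t : ℝ) (ht : 0 < t) :
    t - 1 ≤ t * Real.log t := by
  have h := Real.log_le_sub_one_of_pos (inv_pos.mpr ht)
  rw [Real.log_inv] at h
  have h2 : t * (-Real.log t) ≤ t * (t⁻¹ - 1) := by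
    exact mul_le_mul_of_nonneg_left h ht.le
  have h3 : t * t⁻¹ = 1 := mul_inv_cancel₀ ht.ne'
  nlinarith

theorem stmt_3 (x : ℝ) (hx : 0 ≤ x) :
    x ^ 2 * Real.log (x ^ 2) ≤
      5 * (x - 1) ^ 2 + (x ^ 2 - 1) +
        (max (x - 2) 0) ^ 2 * Real.log ((max (x - 2) 0) ^ 2) := by
  rcases le_or_gt x 2 with h2 | h2
  · -- case 0 ≤ x ≤ 2 : max = 0
    have hm : max (x - 2) 0 = 0 := max_eq_right (by linarith)
    rw [hm]
    simp only [ne_eq, OfNat.ofNat_ne_zero, not_false_eq_true, zero_pow, Real.log_zero,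
      zero_mul, add_zero]
    rcases eq_or_lt_of_le hx with h0 | h0
    · rw [← h0]; norm_num
    · have hl : Real.log x ≤ x - 1 := Real.log_le_sub_one_of_pos h0
      have hlx : Real.log (x ^ 2) = 2 * Real.log x := by
        rw [Real.log_pow]; push_cast; ring
      rw [hlx]
      have : x ^ 2 * (2 * Real.log x) ≤ x ^ 2 * (2 * (x - 1)) := by
        apply mul_le_mul_of_nonneg_left (by linarith) (by positivity)
      nlinarith [sq_nonneg (x - 1), sq_nonneg x, mul_nonneg (mul_nonneg hx hx) (by linarith : (0:ℝ) ≤ 2 - x)]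
  · have hy : 0 < x - 2 := by linarith
    have hm : max (x - 2) 0 = x - 2 := max_eq_left (by linarith)
    rw [hm]
    set y : ℝ := x - 2 with hydef
    have hx0 : 0 < x := by linarith
    have hlx : Real.log (x ^ 2) = 2 * Real.log x := by
      rw [Real.log_pow]; push_cast; ring
    have hly : Real.log (y ^ 2) = 2 * Real.log y := by
      rw [Real.log_pow]; push_cast; ring
    rw [hlx, hly]
    have hl2 : Real.log 2 < 0.6931471808 := Real.log_two_lt_d9
    have hl2' : (0:ℝ) < Real.log 2 := Real.log_pos (by norm_num)
    rcases le_or_gt x 4 with h4 | h4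
    · -- case 2 < x ≤ 4
      -- log x ≤ log 2 + (x-2)/2  (tangent at 2)
      have ht : Real.log (x / 2) ≤ x / 2 - 1 :=
        Real.log_le_sub_one_of_pos (by positivity)
      rw [Real.log_div hx0.ne' (by norm_num)] at ht
      have hLx : Real.log x ≤ Real.log 2 + (x - 2) / 2 := by linarith
      -- y^2 * (2 log y) ≥ y^2 - 1
      have hyl : y ^ 2 - 1 ≤ y ^ 2 * Real.log (y ^ 2) := by
        have := aux_sub_one_le_mul_log (y ^ 2) (by positivity)
        linarith
      rw [hly] at hyl
      have hmul : x ^ 2 * (2 * Real.log x) ≤ x ^ 2 * (2 * (Real.log 2 + (x - 2) / 2)) :=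
        mul_le_mul_of_nonneg_left (by linarith) (by positivity)
      -- polynomial: x^3 + (2 log 2 - 9) x^2 + 14 x - 7 ≤ 0 on [2,4]
      nlinarith [mul_nonneg (mul_nonneg hy.le hy.le) (by linarith : (0:ℝ) ≤ 4 - x),
        mul_nonneg (by linarith : (0:ℝ) ≤ 4 - x) (by linarith : (0:ℝ) ≤ x - 2),
        sq_nonneg (x - 2), sq_nonneg (x - 4), mul_pos hx0 hx0]
    · -- case x > 4, y = x - 2 ≥ 2
      have hy2 : (2:ℝ) ≤ y := by simp [hydef]; linarith
      have hy0 : (0:ℝ) < y := by linarith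
      -- log x - log y ≤ 2 / y
      have ht : Real.log (x / y) ≤ x / y - 1 :=
        Real.log_le_sub_one_of_pos (by positivity)
      rw [Real.log_div hx0.ne' hy0.ne'] at ht
      have hxy : x / y - 1 = 2 / y := by field_simp; ring
      rw [hxy] at ht
      -- log y ≤ log 2 + (y-2)/2
      have ht2 : Real.log (y / 2) ≤ y / 2 - 1 :=
        Real.log_le_sub_one_of_pos (by positivity)
      rw [Real.log_div hy0.ne' (by norm_num)] at ht2
      have hLy : Real.log y ≤ Real.log 2 + (y - 2) / 2 := by linarith
      have hMy : 0 ≤ Real.log y := Real.log_nonneg (by linarith)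
      -- 4 x^2 / y ≤ 4 x + 16
      have hdiv : 4 * x ^ 2 / y ≤ 4 * x + 16 := by
        rw [div_le_iff₀ hy0]
        nlinarith
      -- 2 x^2 (log x - log y) ≤ 4 x^2 / y
      have hstep : 2 * x ^ 2 * (Real.log x - Real.log y) ≤ 4 * x ^ 2 / y := by
        have h1 : 2 * x ^ 2 * (Real.log x - Real.log y) ≤ 2 * x ^ 2 * (2 / y) :=
          mul_le_mul_of_nonneg_left ht (by positivity)
        have h2 : 2 * x ^ 2 * (2 / y) = 4 * x ^ 2 / y := by ring
        linarith
      -- remaining: 8 (x-1) log y ≤ 6 x^2 - 14 x - 12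
      have hrem : 8 * (x - 1) * Real.log y ≤ 6 * x ^ 2 - 14 * x - 12 := by
        have h1 : 8 * (x - 1) * Real.log y ≤ 8 * (x - 1) * (Real.log 2 + (y - 2) / 2) :=
          mul_le_mul_of_nonneg_left hLy (by linarith)
        nlinarith [mul_nonneg (by linarith : (0:ℝ) ≤ x - 1) (by linarith : (0:ℝ) ≤ 1 - Real.log 2)]
      have hid : 2 * x ^ 2 * Real.log y - 2 * y ^ 2 * Real.log y
          = 8 * (x - 1) * Real.log y := by rw [hydef]; ring
      linarith [hstep, hrem, hdiv, hid]
end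

section
/- Let 1 < α ≤ 2, β = α/(α-1), a > 0. Define L_{a,α}(x) = x²/2 for |x| ≤ a and L_{a,α}(x) = a^{2-α}|x|^α/α + a²(α-2)/(2α) for |x| ≥ a, and define H_{a,α}(x) = x²/2 for |x| ≤ a and H_{a,α}(x) = a^{2-β}|x|^β/β + a²(β-2)/(2β) for |x| ≥ a. Then H_{a,α} is the Fenchel–Legendre transform of L_{a,α}, i.e., H_{a,α}(y) = sup_{x ∈ ℝ} (xy - L_{a,α}(x)) for all y ∈ ℝ. -/
open Real

/-!
After the scaling `Lmod a p x = a² · Lmod 1 p (x / a)` it suffices to treat `a = 1`. Outside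
`[-1, 1]` both functions are Young's `|x|^p / p` plus constants that cancel because
`1/α + 1/β = 1`, so Young's inequality and its equality case `s^α = t^β` settle the case
`|s|, |t| > 1`. The mixed cases follow from Bernoulli's inequality: it gives
`x²/2 ≤ Lmod 1 β x` since `β ≥ 2`, and `|x| - 1/2 ≤ Lmod 1 α x` since `α ≥ 1`.
-/

/-- The modified cost function: quadratic on `[-a,a]`, power-`p` growth outside. -/
noncomputable def Lmod (a p : ℝ) (x : ℝ) : ℝ :=
  if |x| ≤ a then x ^ 2 / 2
  else a ^ (2 - p) * |x| ^ p / p + a ^ 2 * (p - 2) / (2 * p)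

lemma Real.HolderConjugate.two_le_of_le_two {p q : ℝ} (h : p.HolderConjugate q) (hp : p ≤ 2) :
    2 ≤ q := by
  rw [h.conjugate_eq, le_div_iff₀ h.sub_one_pos]
  linarith

lemma Lmod_neg (a p x : ℝ) : Lmod a p (-x) = Lmod a p x := by
  simp only [Lmod, abs_neg, neg_sq]

lemma Lmod_eq_mul_Lmod_one {a : ℝ} (ha : 0 < a) (p x : ℝ) :
    Lmod a p x = a ^ 2 * Lmod 1 p (x / a) := by
  have habs : |x / a| = |x| / a := by rw [abs_div, abs_of_pos ha]
  simp only [Lmod, habs, div_le_one ha, one_rpow, one_pow, one_mul]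
  split_ifs
  · field_simp
  · rw [div_rpow (abs_nonneg x) ha.le, ← rpow_natCast a 2]
    have : a ^ (2 - p) * a ^ p = a ^ ((2 : ℕ) : ℝ) := by
      rw [← rpow_add ha]; norm_num
    field_simp
    linear_combination (2 * |x| ^ p / p) * this

lemma Lmod_one_of_abs_le {x : ℝ} (p : ℝ) (hx : |x| ≤ 1) : Lmod 1 p x = x ^ 2 / 2 :=
  if_pos hx

lemma Lmod_one_of_one_lt_abs {p x : ℝ} (hp : p ≠ 0) (hx : 1 < |x|) :
    Lmod 1 p x = |x| ^ p / p + 1 / 2 - 1 / p := by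
  rw [Lmod, if_neg hx.not_ge, one_rpow, one_pow]
  field_simp
  ring

lemma sq_div_two_le_Lmod_one {q : ℝ} (hq : 2 ≤ q) (x : ℝ) : x ^ 2 / 2 ≤ Lmod 1 q x := by
  rcases le_or_gt |x| 1 with hx | hx
  · rw [Lmod_one_of_abs_le q hx]
  rw [Lmod_one_of_one_lt_abs (by positivity) hx, ← sq_abs]
  -- Bernoulli's inequality for `(x ^ 2) ^ (q / 2)`.
  have hbern : 1 + q / 2 * (|x| ^ 2 - 1) ≤ |x| ^ q := by
    have h := one_add_mul_self_le_rpow_one_add (s := |x| ^ 2 - 1) (by nlinarith)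
      (by linarith : 1 ≤ q / 2)
    have hpow : (|x| ^ 2) ^ (q / 2) = |x| ^ q := by
      rw [← rpow_natCast, ← rpow_mul (abs_nonneg x)]
      congr 1
      push_cast
      ring
    rwa [add_sub_cancel, hpow] at h
  have hq0 : 0 < q := by linarith
  rw [div_add' _ _ _ hq0.ne', div_sub_div_same, le_div_iff₀ hq0]
  linarith

lemma abs_sub_half_le_Lmod_one {p : ℝ} (hp : 1 ≤ p) (x : ℝ) : |x| - 1 / 2 ≤ Lmod 1 p x := by
  rcases le_or_gt |x| 1 with hx | hx
  · rw [Lmod_one_of_abs_le p hx, ← sq_abs]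
    nlinarith [sq_nonneg (|x| - 1)]
  rw [Lmod_one_of_one_lt_abs (by positivity) hx]
  have hbern := one_add_mul_self_le_rpow_one_add (s := |x| - 1) (by linarith) hp
  rw [add_sub_cancel] at hbern
  have hp0 : 0 < p := by linarith
  rw [div_add' _ _ _ hp0.ne', div_sub_div_same, le_div_iff₀ hp0]
  linarith

lemma mul_sub_Lmod_one_le {α β : ℝ} (h : α.HolderConjugate β) (hα2 : α ≤ 2) (s t : ℝ) :
    s * t - Lmod 1 α s ≤ Lmod 1 β t := by
  rcases le_or_gt |s| 1 with hs | hs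
  · rw [Lmod_one_of_abs_le α hs]
    nlinarith [sq_nonneg (s - t), sq_div_two_le_Lmod_one (h.two_le_of_le_two hα2) t]
  rcases le_or_gt |t| 1 with ht | ht
  · have hst : s * t ≤ |s| * |t| := (le_abs_self _).trans (abs_mul s t).le
    rw [Lmod_one_of_abs_le β ht, ← sq_abs t]
    nlinarith [abs_sub_half_le_Lmod_one h.lt.le s]
  rw [Lmod_one_of_one_lt_abs h.ne_zero hs, Lmod_one_of_one_lt_abs h.symm.ne_zero ht]
  have := h.one_div_add_one_div
  linarith [young_inequality s t h]

lemma exists_mul_sub_Lmod_one_eq_of_nonneg {α β : ℝ} (h : α.HolderConjugate β) {t : ℝ}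
    (ht : 0 ≤ t) : ∃ s, s * t - Lmod 1 α s = Lmod 1 β t := by
  rcases le_or_gt t 1 with ht1 | ht1
  · refine ⟨t, ?_⟩
    rw [Lmod_one_of_abs_le α (by rwa [abs_of_nonneg ht]), Lmod_one_of_abs_le β
      (by rwa [abs_of_nonneg ht])]
    ring
  -- The equality case of Young's inequality: `s ^ α = t ^ β`.
  set s := t ^ (β - 1)
  have hs1 : 1 < s := one_lt_rpow ht1 (by linarith [h.symm.lt])
  have hsα : s ^ α = t ^ β := by rw [← rpow_mul ht, h.symm.sub_one_mul_conj]
  have hyoung := (young_inequality_eq_iff_of_nonneg (by positivity) ht h).mpr hsα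
  refine ⟨s, ?_⟩
  rw [Lmod_one_of_one_lt_abs h.ne_zero (by rwa [abs_of_pos (by positivity)]),
    Lmod_one_of_one_lt_abs h.symm.ne_zero (by rwa [abs_of_nonneg ht]),
    abs_of_pos (by positivity), abs_of_nonneg ht, hyoung, hsα]
  have := h.one_div_add_one_div
  linarith

lemma exists_mul_sub_Lmod_one_eq {α β : ℝ} (h : α.HolderConjugate β) (t : ℝ) :
    ∃ s, s * t - Lmod 1 α s = Lmod 1 β t := by
  rcases le_total 0 t with ht | ht
  · exact exists_mul_sub_Lmod_one_eq_of_nonneg h ht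
  obtain ⟨s, hs⟩ := exists_mul_sub_Lmod_one_eq_of_nonneg h (neg_nonneg.mpr ht)
  refine ⟨-s, ?_⟩
  rwa [Lmod_neg, ← Lmod_neg 1 β t, neg_mul_comm]

lemma isGreatest_range_mul_sub_Lmod {α β a : ℝ} (h : α.HolderConjugate β) (hα2 : α ≤ 2)
    (ha : 0 < a) (y : ℝ) :
    IsGreatest (Set.range fun x ↦ x * y - Lmod a α x) (Lmod a β y) := by
  have hscale : ∀ x, x * y - Lmod a α x = a ^ 2 * (x / a * (y / a) - Lmod 1 α (x / a)) := by
    intro x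
    rw [Lmod_eq_mul_Lmod_one ha]
    field_simp
  constructor
  · obtain ⟨s, hs⟩ := exists_mul_sub_Lmod_one_eq h (y / a)
    refine ⟨a * s, ?_⟩
    simp only [hscale, mul_div_cancel_left₀ s ha.ne', hs, ← Lmod_eq_mul_Lmod_one ha]
  · rintro _ ⟨x, rfl⟩
    simp only [hscale, Lmod_eq_mul_Lmod_one ha β y]
    gcongr
    exact mul_sub_Lmod_one_le h hα2 _ _

theorem stmt_4 (α β a : ℝ) (hα : 1 < α) (hα2 : α ≤ 2) (ha : 0 < a)
    (hβ : 1 / α + 1 / β = 1) :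
    ∀ y : ℝ, Lmod a β y = ⨆ x : ℝ, (x * y - Lmod a α x) := by
  have h : α.HolderConjugate β := holderConjugate_iff.mpr ⟨hα, by simpa only [one_div] using hβ⟩
  intro y
  exact (isGreatest_range_mul_sub_Lmod h hα2 ha y).csSup_eq.symm
end

section
/- Let 1 ≤ α ≤ 2, β = α/(α-1), and a > 0. For n ≥ 1 and v = (v₁,…,vₙ) ∈ ℝⁿ with Σᵢ vᵢ² ≤ 1, and any t > 0, one has Σᵢ H_{a,α}(t vᵢ) ≤ H_{a,α}(t). -/
open Real

/-- The modified energy function `H_{a,α}`, with values in `EReal` so as to cover the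
case `α = 1` where it is `+∞` outside `[-a,a]`; for `α > 1` it is `Lmod a β` with
`β = α/(α-1)` the conjugate exponent. -/
noncomputable def Hmod (a α β : ℝ) (x : ℝ) : EReal :=
  if α = 1 then (if |x| ≤ a then ((x ^ 2 / 2 : ℝ) : EReal) else ⊤)
  else ((Lmod a β x : ℝ) : EReal)

/-!
For `β ≥ 2` the ratio `Lmod a β x / x²` is nondecreasing in `x > 0`: it is `1/2` on `(0, a]`,
and at `x = a u` with `u ≥ 1` it is `(u ^ (β - 2) + (β - 2) / 2 · u⁻²) / β`, which is monotone
because `w ^ γ - 1 ≥ γ log w` and `1 - w⁻² ≤ 2 log w` for `w ≥ 1`. Hence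
`Lmod a β (t vᵢ) ≤ vᵢ² Lmod a β t` whenever `|vᵢ| ≤ 1`, and summing uses `∑ vᵢ² ≤ 1`.
For `α = 1` either `t > a` and the right side is `⊤`, or every `|t vᵢ| ≤ a` and both sides are
quadratic.
-/

lemma EReal.coe_finset_sum {ι : Type*} (s : Finset ι) (f : ι → ℝ) :
    ((∑ i ∈ s, f i : ℝ) : EReal) = ∑ i ∈ s, (f i : EReal) := by
  classical
  induction s using Finset.induction_on with
  | empty => simp
  | insert x s hx ih => rw [Finset.sum_insert hx, Finset.sum_insert hx, EReal.coe_add, ih]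

lemma abs_le_one_of_sum_sq_le_one {ι : Type*} {s : Finset ι} {v : ι → ℝ}
    (hv : ∑ j ∈ s, v j ^ 2 ≤ 1) {i : ι} (hi : i ∈ s) : |v i| ≤ 1 :=
  (sq_le_one_iff_abs_le_one _).1 <|
    (Finset.single_le_sum (fun j _ => sq_nonneg (v j)) hi).trans hv

section Profile

variable {γ u s : ℝ}

lemma sub_rpow_ge_mul_log (hγ : 0 ≤ γ) (hu : 1 ≤ u) (hus : u ≤ s) :
    γ * log (s / u) ≤ s ^ γ - u ^ γ := by
  have hu0 : 0 < u := by linarith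
  have hw : 0 < s / u := div_pos (by linarith) hu0
  have hlog : 0 ≤ γ * log (s / u) :=
    mul_nonneg hγ (log_nonneg ((one_le_div hu0).2 hus))
  have hwγ : 1 + γ * log (s / u) ≤ (s / u) ^ γ := by
    rw [rpow_def_of_pos hw, mul_comm (log _) γ]
    linarith [add_one_le_exp (γ * log (s / u))]
  have hs : s ^ γ = u ^ γ * (s / u) ^ γ := by
    rw [← mul_rpow hu0.le hw.le, mul_div_cancel₀ _ hu0.ne']
  have huγ : 1 ≤ u ^ γ := one_le_rpow hu hγ
  nlinarith

lemma inv_sq_sub_inv_sq_le_two_mul_log (hu : 1 ≤ u) (hus : u ≤ s) :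
    (u ^ 2)⁻¹ - (s ^ 2)⁻¹ ≤ 2 * log (s / u) := by
  have hu0 : 0 < u := by linarith
  have hw : 0 < (s / u) ^ 2 := pow_pos (div_pos (by linarith) hu0) 2
  have hbracket : 0 ≤ 1 - ((s / u) ^ 2)⁻¹ :=
    sub_nonneg.2 (inv_le_one_of_one_le₀ (one_le_pow₀ ((one_le_div hu0).2 hus)))
  have hu2 : (u ^ 2)⁻¹ ≤ 1 := inv_le_one_of_one_le₀ (one_le_pow₀ hu)
  calc (u ^ 2)⁻¹ - (s ^ 2)⁻¹ = (u ^ 2)⁻¹ * (1 - ((s / u) ^ 2)⁻¹) := by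
        field_simp
    _ ≤ 1 - ((s / u) ^ 2)⁻¹ := mul_le_of_le_one_left hbracket hu2
    _ ≤ log ((s / u) ^ 2) := one_sub_inv_le_log_of_pos hw
    _ = 2 * log (s / u) := by rw [log_pow, Nat.cast_ofNat]

noncomputable def lmodProfile (γ u : ℝ) : ℝ := u ^ γ + γ / 2 * (u ^ 2)⁻¹

lemma lmodProfile_monotoneOn (hγ : 0 ≤ γ) : MonotoneOn (lmodProfile γ) (Set.Ici 1) := by
  intro u hu s _ hus
  have h₁ := sub_rpow_ge_mul_log hγ hu hus
  have h₂ := inv_sq_sub_inv_sq_le_two_mul_log hu hus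
  unfold lmodProfile
  nlinarith

end Profile

section Lmod

variable {a β : ℝ}

lemma Lmod_abs (x : ℝ) : Lmod a β |x| = Lmod a β x := by
  simp only [Lmod, abs_abs, sq_abs]

lemma Lmod_zero (ha : 0 ≤ a) : Lmod a β 0 = 0 := by
  simp [Lmod, ha]

lemma Lmod_nonneg (hβ : 2 ≤ β) (ha : 0 ≤ a) (x : ℝ) : 0 ≤ Lmod a β x := by
  unfold Lmod
  split_ifs
  · positivity
  · rw [mul_div_assoc]
    exact add_nonneg
      (mul_nonneg (rpow_nonneg ha _) (div_nonneg (by positivity) (by linarith)))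
      (div_nonneg (mul_nonneg (sq_nonneg a) (by linarith)) (by linarith))

lemma Lmod_div_sq (hβ : β ≠ 0) (ha : 0 < a) {x : ℝ} (hx : 0 < x) :
    Lmod a β x / x ^ 2 = lmodProfile (β - 2) (max 1 (x / a)) / β := by
  unfold Lmod lmodProfile
  rw [abs_of_pos hx]
  split_ifs with hxa
  · rw [max_eq_left ((div_le_one ha).2 hxa), one_rpow]
    field_simp
    ring
  · have hax : a < x := not_le.1 hxa
    have hxβ : x ^ β = x ^ (β - 2) * x ^ 2 := by
      rw [← rpow_natCast, ← rpow_add hx]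
      norm_num
    have haβ : a ^ (2 - β) = (a ^ (β - 2))⁻¹ := by
      rw [← rpow_neg ha.le, neg_sub]
    rw [max_eq_right ((one_le_div ha).2 hax.le), div_rpow hx.le ha.le, hxβ, haβ]
    field_simp

lemma Lmod_div_sq_monotoneOn (hβ : 2 ≤ β) (ha : 0 < a) :
    MonotoneOn (fun x => Lmod a β x / x ^ 2) (Set.Ioi 0) := by
  intro x hx y hy hxy
  have hβ0 : β ≠ 0 := by linarith
  simp only [Lmod_div_sq hβ0 ha hx, Lmod_div_sq hβ0 ha hy]
  gcongr ?_ / β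
  exact lmodProfile_monotoneOn (by linarith) (Set.mem_Ici.2 (le_max_left _ _)) (Set.mem_Ici.2 (le_max_left _ _))
      (max_le_max le_rfl (by gcongr))

lemma Lmod_mul_le_sq_mul (hβ : 2 ≤ β) (ha : 0 < a) {t v : ℝ} (ht : 0 < t) (hv : |v| ≤ 1) :
    Lmod a β (t * v) ≤ v ^ 2 * Lmod a β t := by
  rcases eq_or_ne v 0 with rfl | hv0
  · simp [Lmod_zero ha.le]
  have htv : 0 < |t * v| := abs_pos.2 (mul_ne_zero ht.ne' hv0)
  have hle : |t * v| ≤ t := by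
    rw [abs_mul, abs_of_pos ht]
    exact mul_le_of_le_one_right ht.le hv
  have hmono := Lmod_div_sq_monotoneOn hβ ha htv (Set.mem_Ioi.2 ht) hle
  simp only [Lmod_abs, sq_abs] at hmono
  rw [div_le_div_iff₀ (by positivity) (by positivity)] at hmono
  have ht2 : 0 < t ^ 2 := by positivity
  nlinarith

lemma sum_Lmod_mul_le {ι : Type*} (s : Finset ι) {v : ι → ℝ} (hv : ∑ i ∈ s, v i ^ 2 ≤ 1)
    (hβ : 2 ≤ β) (ha : 0 < a) {t : ℝ} (ht : 0 < t) :
    ∑ i ∈ s, Lmod a β (t * v i) ≤ Lmod a β t :=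
  calc ∑ i ∈ s, Lmod a β (t * v i) ≤ ∑ i ∈ s, v i ^ 2 * Lmod a β t :=
        Finset.sum_le_sum fun _ hi =>
          Lmod_mul_le_sq_mul hβ ha ht (abs_le_one_of_sum_sq_le_one hv hi)
    _ = (∑ i ∈ s, v i ^ 2) * Lmod a β t := (Finset.sum_mul ..).symm
    _ ≤ Lmod a β t := mul_le_of_le_one_left (Lmod_nonneg hβ ha.le t) hv

end Lmod

lemma sum_sq_mul_div_two_le {ι : Type*} (s : Finset ι) {v : ι → ℝ}
    (hv : ∑ i ∈ s, v i ^ 2 ≤ 1) (t : ℝ) :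
    ∑ i ∈ s, (t * v i) ^ 2 / 2 ≤ t ^ 2 / 2 := by
  have hsum : ∑ i ∈ s, (t * v i) ^ 2 / 2 = t ^ 2 / 2 * ∑ i ∈ s, v i ^ 2 := by
    rw [Finset.mul_sum]
    exact Finset.sum_congr rfl fun _ _ => by ring
  rw [hsum]
  exact mul_le_of_le_one_right (by positivity) hv

theorem stmt_18_general (α β a : ℝ) (hα : 1 ≤ α) (hα2 : α ≤ 2) (hβ : β = α / (α - 1))
    (ha : 0 < a) (n : ℕ) (v : Fin n → ℝ) (hv : ∑ i, v i ^ 2 ≤ 1)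
    (t : ℝ) (ht : 0 < t) :
    ∑ i, Hmod a α β (t * v i) ≤ Hmod a α β t := by
  unfold Hmod
  split_ifs with hα1 hta
  · have htv : ∀ i, |t * v i| ≤ a := fun i => by
      rw [abs_mul]
      exact (mul_le_of_le_one_right (abs_nonneg t)
        (abs_le_one_of_sum_sq_le_one hv (Finset.mem_univ i))).trans hta
    simp only [htv, if_true, ← EReal.coe_finset_sum, EReal.coe_le_coe_iff]
    exact sum_sq_mul_div_two_le _ hv t
  · exact le_top
  · have hβ2 : 2 ≤ β := by
      rw [hβ, le_div_iff₀ (by contrapose! hα1; linarith)]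
      linarith
    rw [← EReal.coe_finset_sum, EReal.coe_le_coe_iff]
    exact sum_Lmod_mul_le _ hv hβ2 ha ht

theorem stmt_18 (α β a : ℝ) (hα : 1 ≤ α) (hα2 : α ≤ 2) (hβ : β = α / (α - 1))
    (ha : 0 < a) (n : ℕ) (hn : 1 ≤ n) (v : Fin n → ℝ) (hv : ∑ i, v i ^ 2 ≤ 1)
    (t : ℝ) (ht : 0 < t) :
    ∑ i, Hmod a α β (t * v i) ≤ Hmod a α β t :=
  stmt_18_general α β a hα hα2 hβ ha n v hv t ht
end
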